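/- Let α ∈ [0,1]. A triple μ⃗ ∈ M_α is α-critical if and only if D_h(μ⃗) = 0 for every function h ∈ C²(ℂ). -/

import Mathlib

open MeasureTheory Complex Polynomial

noncomputable section

/-- The (topological) support of a measure on `ℂ`: the set of points all of whose open
neighborhoods have positive measure. -/
def msupport (μ : Measure ℂ) : Set ℂ :=
  {x : ℂ | ∀ U : Set ℂ, IsOpen U → x ∈ U → μ U ≠ 0}

/-- The interaction matrix `A`. -/
def interA : Fin 3 → Fin 3 → ℝ :=
  ![![1, 1/2, 1/2], ![1/2, 1, -1/2], ![1/2, -1/2, 1]]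

/-- The logarithmic energy `I(μ,ν) = ∬ log(1/|x-y|) dμ(x) dν(y)`. -/
def logEnergy (μ ν : Measure ℂ) : ℝ :=
  ∫ x, ∫ y, Real.log (1 / ‖x - y‖) ∂ν ∂μ

/-- The total energy functional `E(μ⃗)` with external fields `φ_j = Re Φ_j`. -/
def energyE (Φ : Fin 3 → Polynomial ℂ) (μ : Fin 3 → Measure ℂ) : ℝ :=
  (∑ j, ∑ k, interA j k * logEnergy (μ j) (μ k)) +
    ∑ j, ∫ x, ((Φ j).eval x).re ∂(μ j)

/-- Membership in the class `M_α`: finite positive Borel measures with compact supports of zero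
planar Lebesgue measure, finite energy (stated as integrability of all the energy integrands),
finite pairwise intersections of supports, and the prescribed total masses. -/
structure InClassM (α : ℝ) (Φ : Fin 3 → Polynomial ℂ) (μ : Fin 3 → Measure ℂ) : Prop where
  finite : ∀ j, IsFiniteMeasure (μ j)
  compactSupp : ∀ j, IsCompact (msupport (μ j))
  lebesgueNull : ∀ j, volume (msupport (μ j)) = 0
  energyInt : ∀ j k, Integrable (fun p : ℂ × ℂ => Real.log (1 / ‖p.1 - p.2‖)) ((μ j).prod (μ k))
  fieldInt : ∀ j, Integrable (fun x => ((Φ j).eval x).re) (μ j)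
  interFinite : Set.Finite ((msupport (μ 0) ∩ msupport (μ 1)) ∪
      (msupport (μ 0) ∩ msupport (μ 2)) ∪ (msupport (μ 1) ∩ msupport (μ 2)))
  mass01 : (μ 0 Set.univ).toReal + (μ 1 Set.univ).toReal = 1
  mass02 : (μ 0 Set.univ).toReal + (μ 2 Set.univ).toReal = α
  mass12 : (μ 1 Set.univ).toReal - (μ 2 Set.univ).toReal = 1 - α

/-- The quantity `D_h(μ⃗)`. -/
def Dvar (Φ : Fin 3 → Polynomial ℂ) (μ : Fin 3 → Measure ℂ) (h : ℂ → ℂ) : ℂ :=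
  -(∑ j, ∑ k, (interA j k : ℂ) * ∫ x, ∫ y, (h x - h y) / (x - y) ∂(μ k) ∂(μ j)) +
    ∑ j, ∫ x, (Polynomial.derivative (Φ j)).eval x * h x ∂(μ j)

/-- The pushforward `μ^t` of `μ` under the variation `z ↦ z + t h(z)`. -/
def pushMeas (h : ℂ → ℂ) (t : ℝ) (μ : Measure ℂ) : Measure ℂ :=
  Measure.map (fun z => z + (t : ℂ) * h z) μ

/-- `μ⃗` is an `α`-critical measure: for every `h ∈ C²(ℂ)`,
`(E(μ⃗^t) - E(μ⃗))/t → 0` as `t → 0`. -/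
def IsCriticalMeasure (Φ : Fin 3 → Polynomial ℂ) (μ : Fin 3 → Measure ℂ) : Prop :=
  ∀ h : ℂ → ℂ, ContDiff ℝ 2 h →
    Filter.Tendsto
      (fun t : ℝ => (energyE Φ (fun j => pushMeas h t (μ j)) - energyE Φ μ) / t)
      (nhdsWithin 0 {(0 : ℝ)}ᶜ) (nhds 0)

/-- The Cauchy transform `C^μ(z) = ∫ dμ(x)/(x - z)`. -/
def cauchyT (μ : Measure ℂ) (z : ℂ) : ℂ := ∫ x, (x - z)⁻¹ ∂μ

/-- The functions `ξ₁, ξ₂, ξ₃` (0-indexed). -/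
def xiF (Φ : Fin 3 → Polynomial ℂ) (μ : Fin 3 → Measure ℂ) : Fin 3 → ℂ → ℂ :=
  ![fun z => ((Polynomial.derivative (Φ 0)).eval z + (Polynomial.derivative (Φ 1)).eval z) / 3
      + cauchyT (μ 0) z + cauchyT (μ 1) z,
    fun z => -((Polynomial.derivative (Φ 0)).eval z + (Polynomial.derivative (Φ 2)).eval z) / 3
      - cauchyT (μ 0) z - cauchyT (μ 2) z,
    fun z => -(Polynomial.derivative (Φ 1)).eval z / 3 + (Polynomial.derivative (Φ 2)).eval z / 3
      - cauchyT (μ 1) z + cauchyT (μ 2) z]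

/-- The function `R(z)`. -/
def Rpol (Φ : Fin 3 → Polynomial ℂ) (μ : Fin 3 → Measure ℂ) (z : ℂ) : ℂ :=
  (1/9) * ∑ j, ∑ k, (interA j k : ℂ) * (Polynomial.derivative (Φ j)).eval z *
      (Polynomial.derivative (Φ k)).eval z
  - ∑ j, ∫ x, ((Polynomial.derivative (Φ j)).eval x - (Polynomial.derivative (Φ j)).eval z)
      / (x - z) ∂(μ j)

/-!
Pushing `μ⃗` forward along `z ↦ z + t h(z)` turns the logarithmic kernel at `(x, y)` into
`log 1/|(x - y) + t (h x - h y)|`, whose `t`-derivative at `0` is `-Re ((h x - h y)/(x - y))`,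
and turns `φ_j(x)` into `φ_j(x + t h x)`, whose `t`-derivative at `0` is `Re (Φ_j'(x) h(x))`.
All measures live on a ball on which `h` is Lipschitz, so these derivatives are bounded uniformly
for small `t`, and dominated convergence differentiates under the integrals: `t ↦ E(μ⃗^t)` has
derivative `Re D_h(μ⃗)` at `0`. Hence `μ⃗` is critical iff `Re D_h(μ⃗) = 0` for all `h`, and since
`D_{i h} = i D_h`, this forces `D_h(μ⃗) = 0`.
-/

open Filter Metric
open scoped NNReal Topology

lemma hasDerivAt_log_inv_norm {f : ℝ → ℂ} {f' : ℂ} {t : ℝ} (hf : HasDerivAt f f' t)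
    (h0 : f t ≠ 0) : HasDerivAt (fun s => Real.log (1 / ‖f s‖)) (-(f' / f t).re) t := by
  have hsq : (fun s => Real.log (1 / ‖f s‖)) = fun s => -(Real.log (‖f s‖ ^ 2) / 2) := by
    funext s
    rw [one_div, Real.log_inv, Real.log_pow]
    ring
  have hpos : ‖f t‖ ^ 2 ≠ 0 := by positivity
  rw [hsq]
  refine ((hf.norm_sq.log hpos).div_const 2).neg.congr_deriv ?_
  rw [Complex.div_re, Complex.normSq_eq_norm_sq, Complex.inner]
  field_simp
  simp only [mul_re, conj_re, conj_im, mul_neg, sub_neg_eq_add, neg_add_rev]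

section PerturbedKernel

variable {w Δ : ℂ} {L t : ℝ}

lemma norm_le_two_mul_norm_add_mul (hΔ : ‖Δ‖ ≤ L * ‖w‖) (ht : |t| * L ≤ 1 / 2) :
    ‖w‖ ≤ 2 * ‖w + t * Δ‖ := by
  have htΔ : ‖(t : ℂ) * Δ‖ ≤ ‖w‖ / 2 := by
    rw [norm_mul, Complex.norm_real, Real.norm_eq_abs]
    nlinarith [abs_nonneg t, norm_nonneg w]
  have := norm_sub_norm_le w (-(t * Δ))
  rw [sub_neg_eq_add, norm_neg] at this
  linarith

lemma abs_re_div_add_mul_le (hL : 0 ≤ L) (hΔ : ‖Δ‖ ≤ L * ‖w‖) (ht : |t| * L ≤ 1 / 2) :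
    |(Δ / (w + t * Δ)).re| ≤ 2 * L := by
  have hw := norm_le_two_mul_norm_add_mul hΔ ht
  refine (Complex.abs_re_le_norm _).trans ?_
  rw [norm_div]
  rcases (norm_nonneg (w + t * Δ)).eq_or_lt with h0 | hpos
  · rw [← h0, div_zero]; positivity
  · rw [div_le_iff₀ hpos]; nlinarith

lemma hasDerivAt_log_inv_norm_add_mul (hΔ : ‖Δ‖ ≤ L * ‖w‖) (ht : |t| * L ≤ 1 / 2) :
    HasDerivAt (fun s : ℝ => Real.log (1 / ‖w + s * Δ‖)) (-(Δ / (w + t * Δ)).re) t := by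
  rcases eq_or_ne w 0 with rfl | hw
  · obtain rfl : Δ = 0 := norm_le_zero_iff.1 (by simpa using hΔ)
    simpa using hasDerivAt_const t (0 : ℝ)
  have hline : HasDerivAt (fun s : ℝ => w + s * Δ) Δ t := by
    simpa using ((hasDerivAt_id (t : ℂ)).comp_ofReal.mul_const Δ).const_add w
  refine hasDerivAt_log_inv_norm hline fun h0 => hw ?_
  simpa [h0] using norm_le_two_mul_norm_add_mul hΔ ht

lemma abs_log_inv_norm_add_mul_sub_le (hL : 0 ≤ L) (hΔ : ‖Δ‖ ≤ L * ‖w‖)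
    (ht : |t| * L ≤ 1 / 2) :
    |Real.log (1 / ‖w + t * Δ‖) - Real.log (1 / ‖w‖)| ≤ 2 * L * |t| := by
  have hseg : ∀ s ∈ Set.uIcc 0 t, |s| * L ≤ 1 / 2 := fun s hs => by
    have : |s| ≤ |t| := by simpa using Set.abs_sub_left_of_mem_uIcc hs
    nlinarith
  have hmvt := Convex.norm_image_sub_le_of_norm_hasDerivWithin_le
    (fun s hs => (hasDerivAt_log_inv_norm_add_mul hΔ (hseg s hs)).hasDerivWithinAt)
    (fun s hs => by simpa using abs_re_div_add_mul_le hL hΔ (hseg s hs))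
    (convex_uIcc 0 t) Set.left_mem_uIcc Set.right_mem_uIcc
  simpa using hmvt

end PerturbedKernel

lemma hasDerivAt_re_eval_add_mul (P : ℂ[X]) (x v : ℂ) (t : ℝ) :
    HasDerivAt (fun s : ℝ => (P.eval (x + s * v)).re) (P.derivative.eval (x + t * v) * v).re t := by
  have hline : HasDerivAt (fun u : ℂ => x + u * v) v t := by
    simpa using ((hasDerivAt_id (t : ℂ)).mul_const v).const_add x
  exact ((P.hasDerivAt _).comp _ hline).real_of_complex

lemma integrable_of_ae_mem_isCompact {X E : Type*} [TopologicalSpace X] [MeasurableSpace X]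
    [OpensMeasurableSpace X] [T2Space X] [NormedAddCommGroup E] {ν : Measure X}
    [IsFiniteMeasure ν] {K : Set X} {f : X → E} (hK : IsCompact K) (hνK : ∀ᵐ x ∂ν, x ∈ K)
    (hf : Continuous f) : Integrable f ν := by
  rw [← Measure.restrict_eq_self_of_ae_mem hνK]
  exact hf.continuousOn.integrableOn_compact hK

lemma ae_mem_prod_of_ae_mem {X Y : Type*} [MeasurableSpace X] [MeasurableSpace Y]
    {ν₁ : Measure X} {ν₂ : Measure Y} [SFinite ν₂] {K₁ : Set X} {K₂ : Set Y}
    (h₁ : ∀ᵐ x ∂ν₁, x ∈ K₁) (h₂ : ∀ᵐ y ∂ν₂, y ∈ K₂) :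
    ∀ᵐ p ∂ν₁.prod ν₂, p.1 ∈ K₁ ∧ p.2 ∈ K₂ :=
  (Measure.quasiMeasurePreserving_fst.ae h₁).and (Measure.quasiMeasurePreserving_snd.ae h₂)

section PushForward

variable {h : ℂ → ℂ}

lemma pushMeas_zero (μ : Measure ℂ) : pushMeas h 0 μ = μ := by
  simp [pushMeas]

lemma logEnergy_pushMeas (ν₁ ν₂ : Measure ℂ) [SFinite ν₂] (hh : Measurable h) (t : ℝ) :
    logEnergy (pushMeas h t ν₁) (pushMeas h t ν₂) =
      ∫ x, ∫ y, Real.log (1 / ‖(x - y) + t * (h x - h y)‖) ∂ν₂ ∂ν₁ := by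
  have hF : Measurable fun z : ℂ => z + t * h z := by fun_prop
  have hkernel : Measurable fun p : ℂ × ℂ => Real.log (1 / ‖p.1 - p.2‖) := by fun_prop
  unfold logEnergy pushMeas
  rw [integral_map hF.aemeasurable
    hkernel.stronglyMeasurable.integral_prod_right.aestronglyMeasurable]
  congr 1 with x
  rw [integral_map hF.aemeasurable (Measurable.aestronglyMeasurable (by fun_prop))]
  ring_nf

theorem hasDerivAt_integral_re_eval_pushMeas (P : ℂ[X]) {ν : Measure ℂ} [IsFiniteMeasure ν]
    {K : Set ℂ} (hK : IsCompact K) (hνK : ∀ᵐ x ∂ν, x ∈ K) (hh : Continuous h) :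
    HasDerivAt (fun t => ∫ x, (P.eval x).re ∂pushMeas h t ν)
      (∫ x, P.derivative.eval x * h x ∂ν).re 0 := by
  have hpush : ∀ t : ℝ,
      ∫ x, (P.eval x).re ∂pushMeas h t ν = ∫ x, (P.eval (x + t * h x)).re ∂ν :=
    fun t => integral_map (by fun_prop) (by fun_prop)
  obtain ⟨B, hB⟩ := ((isCompact_closedBall (0 : ℝ) 1).prod hK).exists_bound_of_continuousOn
    (f := fun q : ℝ × ℂ => P.derivative.eval (q.2 + q.1 * h q.2) * h q.2) (by fun_prop)
  obtain ⟨-, hderiv⟩ := hasDerivAt_integral_of_dominated_loc_of_deriv_le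
    (F := fun (t : ℝ) x => (P.eval (x + t * h x)).re)
    (F' := fun t x => (P.derivative.eval (x + t * h x) * h x).re) (bound := fun _ => B)
    (ball_mem_nhds 0 one_pos) (Eventually.of_forall fun t => by fun_prop)
    (integrable_of_ae_mem_isCompact hK hνK (by fun_prop)) (by fun_prop)
    (hνK.mono fun x hx t ht =>
      (Complex.abs_re_le_norm _).trans (hB (t, x) ⟨ball_subset_closedBall ht, hx⟩))
    (integrable_const B) (Eventually.of_forall fun x t _ => hasDerivAt_re_eval_add_mul P x (h x) t)
  simp only [hpush]
  refine hderiv.congr_deriv ?_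
  simp only [Complex.ofReal_zero, zero_mul, add_zero]
  exact integral_re (integrable_of_ae_mem_isCompact (f := fun x => P.derivative.eval x * h x)
    hK hνK (by fun_prop))

variable {ν₁ ν₂ : Measure ℂ} [IsFiniteMeasure ν₁] [IsFiniteMeasure ν₂] {K : Set ℂ} {L : ℝ≥0}

lemma integrable_dividedDifference (h₁ : ∀ᵐ x ∂ν₁, x ∈ K) (h₂ : ∀ᵐ y ∂ν₂, y ∈ K)
    (hh : Continuous h) (hL : LipschitzOnWith L h K) :
    Integrable (fun p : ℂ × ℂ => (h p.1 - h p.2) / (p.1 - p.2)) (ν₁.prod ν₂) := by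
  refine Integrable.of_bound (Measurable.aestronglyMeasurable (by fun_prop)) L ?_
  filter_upwards [ae_mem_prod_of_ae_mem h₁ h₂] with p hp
  rw [norm_div]
  exact div_le_of_le_mul₀ (norm_nonneg _) L.2 (hL.norm_sub_le hp.1 hp.2)

theorem hasDerivAt_logEnergy_pushMeas (h₁ : ∀ᵐ x ∂ν₁, x ∈ K) (h₂ : ∀ᵐ y ∂ν₂, y ∈ K)
    (hh : Continuous h) (hL : LipschitzOnWith L h K)
    (hint : Integrable (fun p : ℂ × ℂ => Real.log (1 / ‖p.1 - p.2‖)) (ν₁.prod ν₂)) :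
    HasDerivAt (fun t => logEnergy (pushMeas h t ν₁) (pushMeas h t ν₂))
      (-(∫ x, ∫ y, (h x - h y) / (x - y) ∂ν₂ ∂ν₁).re) 0 := by
  set F : ℝ → ℂ × ℂ → ℝ := fun t p => Real.log (1 / ‖(p.1 - p.2) + t * (h p.1 - h p.2)‖)
  set F' : ℝ → ℂ × ℂ → ℝ := fun t p =>
    -((h p.1 - h p.2) / ((p.1 - p.2) + t * (h p.1 - h p.2))).re
  have hF_meas : ∀ t, AEStronglyMeasurable (F t) (ν₁.prod ν₂) := fun t =>
    Measurable.aestronglyMeasurable (by simp only [F]; fun_prop)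
  have hlip : ∀ᵐ p ∂ν₁.prod ν₂, ‖h p.1 - h p.2‖ ≤ L * ‖p.1 - p.2‖ := by
    filter_upwards [ae_mem_prod_of_ae_mem h₁ h₂] with p hp using hL.norm_sub_le hp.1 hp.2
  -- for such `t` the perturbed distance is at least half the original one
  have hsmall : {t : ℝ | |t| * L < 1 / 2} ∈ 𝓝 0 :=
    (isOpen_lt (by fun_prop) continuous_const).mem_nhds (by norm_num)
  have hF_int : ∀ t : ℝ, |t| * L ≤ 1 / 2 → Integrable (F t) (ν₁.prod ν₂) := by
    intro t ht
    have hdiff : Integrable (fun p => F t p - F 0 p) (ν₁.prod ν₂) := by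
      refine Integrable.of_bound ((hF_meas t).sub (hF_meas 0)) (2 * L * |t|) ?_
      filter_upwards [hlip] with p hp
      simpa [F] using abs_log_inv_norm_add_mul_sub_le L.2 hp ht
    refine (hdiff.add hint).congr (Eventually.of_forall fun p => ?_)
    simp [F]
  obtain ⟨-, hderiv⟩ := hasDerivAt_integral_of_dominated_loc_of_deriv_le (F := F) (F' := F')
    (bound := fun _ => 2 * L) hsmall (Eventually.of_forall hF_meas)
    (hF_int 0 (by norm_num)) (Measurable.aestronglyMeasurable (by simp only [F']; fun_prop))
    (hlip.mono fun p hp t ht => by simpa [F'] using abs_re_div_add_mul_le L.2 hp ht.le)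
    (integrable_const _)
    (hlip.mono fun p hp t ht => hasDerivAt_log_inv_norm_add_mul hp ht.le)
  refine (hderiv.congr_deriv ?_).congr_of_eventuallyEq ?_
  · simp only [F', Complex.ofReal_zero, zero_mul, add_zero, integral_neg]
    have hq := integrable_dividedDifference h₁ h₂ hh hL
    rw [integral_integral (f := fun x y => (h x - h y) / (x - y)) hq]
    exact congrArg Neg.neg (integral_re hq)
  · filter_upwards [hsmall] with t ht
    rw [logEnergy_pushMeas ν₁ ν₂ hh.measurable, integral_integral (hF_int t ht.le)]

end PushForward

lemma msupport_eq_support (μ : Measure ℂ) : msupport μ = μ.support := by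
  ext x
  simp only [msupport, Measure.support_eq_forall_isOpen, pos_iff_ne_zero, Set.mem_ofPred_eq]
  exact forall_congr' fun _ => Imp.swap

namespace InClassM

variable {α : ℝ} {Φ : Fin 3 → ℂ[X]} {μ : Fin 3 → Measure ℂ}

lemma exists_ae_mem_closedBall (hμ : InClassM α Φ μ) :
    ∃ R, ∀ j, ∀ᵐ x ∂μ j, x ∈ closedBall (0 : ℂ) R := by
  obtain ⟨R, hR⟩ := (isCompact_iUnion hμ.compactSupp).isBounded.subset_closedBall 0
  refine ⟨R, fun j => ?_⟩
  filter_upwards [Measure.support_mem_ae (μ := μ j)] with x hx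
  exact hR (Set.mem_iUnion_of_mem j (msupport_eq_support (μ j) ▸ hx))

theorem hasDerivAt_energyE_pushMeas (hμ : InClassM α Φ μ) {h : ℂ → ℂ} (hh : ContDiff ℝ 1 h) :
    HasDerivAt (fun t => energyE Φ (fun j => pushMeas h t (μ j))) (Dvar Φ μ h).re 0 := by
  have := hμ.finite
  obtain ⟨R, hR⟩ := hμ.exists_ae_mem_closedBall
  obtain ⟨L, hL⟩ := hh.contDiffOn.exists_lipschitzOnWith one_ne_zero (convex_closedBall 0 R)
    (isCompact_closedBall 0 R)
  have hlog := fun j k => hasDerivAt_logEnergy_pushMeas (hR j) (hR k) hh.continuous hL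
    (hμ.energyInt j k)
  have hfield := fun j => hasDerivAt_integral_re_eval_pushMeas (Φ j) (isCompact_closedBall 0 R)
    (hR j) hh.continuous
  have hsum : HasDerivAt (fun t => energyE Φ (fun j => pushMeas h t (μ j)))
      ((∑ j, ∑ k, interA j k * -(∫ x, ∫ y, (h x - h y) / (x - y) ∂μ k ∂μ j).re) +
        ∑ j, (∫ x, (Φ j).derivative.eval x * h x ∂μ j).re) 0 :=
    (HasDerivAt.fun_sum fun j _ => HasDerivAt.fun_sum fun k _ =>
      (hlog j k).const_mul (interA j k)).add (HasDerivAt.fun_sum fun j _ => hfield j)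
  refine hsum.congr_deriv ?_
  simp [Dvar, Complex.re_sum]

theorem tendsto_energy_slope (hμ : InClassM α Φ μ) {h : ℂ → ℂ} (hh : ContDiff ℝ 1 h) :
    Tendsto (fun t : ℝ => (energyE Φ (fun j => pushMeas h t (μ j)) - energyE Φ μ) / t)
      (𝓝[≠] 0) (𝓝 (Dvar Φ μ h).re) := by
  refine (hμ.hasDerivAt_energyE_pushMeas hh).tendsto_slope.congr fun t => ?_
  simp [slope_def_field, pushMeas_zero]

end InClassM

lemma Dvar_const_mul (Φ : Fin 3 → ℂ[X]) (μ : Fin 3 → Measure ℂ) (h : ℂ → ℂ) (c : ℂ) :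
    Dvar Φ μ (fun z => c * h z) = c * Dvar Φ μ h := by
  simp only [Dvar, ← mul_sub, mul_div_assoc, mul_left_comm _ c, integral_const_mul,
    Finset.mul_sum, mul_add, mul_neg]

theorem critical_iff_Dvar_eq_zero_general (α : ℝ)
    (Φ : Fin 3 → Polynomial ℂ)
    (μ : Fin 3 → Measure ℂ) (hμ : InClassM α Φ μ) :
    IsCriticalMeasure Φ μ ↔ ∀ h : ℂ → ℂ, ContDiff ℝ 2 h → Dvar Φ μ h = 0 := by
  refine ⟨fun hcrit h hh => ?_, fun hD h hh => ?_⟩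
  · have hre : ∀ g : ℂ → ℂ, ContDiff ℝ 2 g → (Dvar Φ μ g).re = 0 := fun g hg =>
      tendsto_nhds_unique (hμ.tendsto_energy_slope (hg.of_le one_le_two)) (hcrit g hg)
    have him := hre _ (contDiff_const.mul hh : ContDiff ℝ 2 fun z => Complex.I * h z)
    rw [Dvar_const_mul, Complex.I_mul_re, neg_eq_zero] at him
    exact Complex.ext (hre h hh) him
  · simpa [hD h hh] using hμ.tendsto_energy_slope (hh.of_le one_le_two)

/-- A triple `μ⃗ ∈ M_α` is `α`-critical if and only if `D_h(μ⃗) = 0`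
for every `h ∈ C²(ℂ)`. -/
theorem critical_iff_Dvar_eq_zero (α : ℝ) (hα : α ∈ Set.Icc (0 : ℝ) 1)
    (Φ : Fin 3 → Polynomial ℂ)
    (hΦ : Polynomial.derivative (Φ 0) - Polynomial.derivative (Φ 1) =
      Polynomial.derivative (Φ 2))
    (μ : Fin 3 → Measure ℂ) (hμ : InClassM α Φ μ) :
    IsCriticalMeasure Φ μ ↔ ∀ h : ℂ → ℂ, ContDiff ℝ 2 h → Dvar Φ μ h = 0 :=
  critical_iff_Dvar_eq_zero_general α Φ μ hμ
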